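/- arXiv:2012.10219 — 4 statements merged into one kernel-verified Lean document; each statement's English description precedes it below -/
import Mathlib

section
/- Let S ≥ 1 and M be natural numbers and let a_0, …, a_M be nonnegative real numbers with Σ_{i=0}^{M} a_i = 1 and Σ_{i=0}^{M} i·a_i < S. Then the complex polynomial P(z) = z^S − Σ_{i=0}^{M} a_i z^i has exactly S roots, counted with multiplicity, in the closed unit disc {z ∈ ℂ : |z| ≤ 1}. -/
/-!
Pick `ρ > 1` so close to `1` that `A(ρ) = ∑ aᵢ ρⁱ < ρ^S` (possible because `A(1) = 1` and
`A'(1) = E[A] < S`) and that no root of `z^S - A(z)` has modulus in `(1, ρ)`. On the circle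
`|z| = ρ` the term `z^S` then dominates every convex combination of `A(z)` and its monomial
`c z^N` of degree `N = deg (z^S - A(z))`, so along the linear deformation of `z^S - c z^N` into
`z^S - A(z)` no root crosses the circle. All these polynomials have degree `N`, so by compactness
their roots move continuously and the number of them inside the circle stays constant; for
`z^S - c z^N` it is visibly `S`.
-/

open Polynomial Filter Topology Finset

namespace Multiset

theorem exists_eq_map_univ_of_card_eq {α : Type*} (s : Multiset α) {n : ℕ} (hs : card s = n) :
    ∃ x : Fin n → α, s = univ.val.map x := by
  obtain ⟨l, rfl⟩ := Quot.exists_rep s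
  obtain rfl : l.length = n := hs
  exact ⟨l.get, by rw [Fin.univ_val_map, List.ofFn_get]; rfl⟩

theorem eventually_filter_lt_eq_filter_le {α : Type*} (s : Multiset α) (f : α → ℝ) (r : ℝ) :
    ∀ᶠ ρ in 𝓝[>] r, s.filter (f · < ρ) = s.filter (f · ≤ r) := by
  classical
  have hmem : ∀ a ∈ s.toFinset, ∀ᶠ ρ in 𝓝[>] r, (f a < ρ ↔ f a ≤ r) := by
    intro a _
    rcases le_or_gt (f a) r with h | h
    · filter_upwards [self_mem_nhdsWithin] with ρ hρ
      exact iff_of_true (h.trans_lt hρ) h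
    · filter_upwards [Ioo_mem_nhdsGT h] with ρ hρ
      exact iff_of_false hρ.2.not_gt h.not_ge
  filter_upwards [(eventually_all_finset _).2 hmem] with ρ hρ
  exact filter_congr fun a ha => hρ a (mem_toFinset.2 ha)

theorem eventually_card_filter_map_univ_eq {ι X : Type*} [TopologicalSpace X] {l : Filter ι}
    {n : ℕ} {x : ι → Fin n → X} {v : Fin n → X} (hx : Tendsto x l (𝓝 v)) {U : Set X}
    [DecidablePred (· ∈ U)] (hv : ∀ j, v j ∉ frontier U) :
    ∀ᶠ i in l, card ((univ.val.map (x i)).filter (· ∈ U)) =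
      card ((univ.val.map v).filter (· ∈ U)) := by
  have hj : ∀ j, ∀ᶠ i in l, (x i j ∈ U ↔ v j ∈ U) := by
    intro j
    have hxj := tendsto_pi_nhds.1 hx j
    rcases (compl_frontier_eq_union_interior (s := U)).subset (hv j) with h | h
    · filter_upwards [hxj (isOpen_interior.mem_nhds h)] with i hi
      exact iff_of_true (interior_subset hi) (interior_subset h)
    · filter_upwards [hxj (isOpen_interior.mem_nhds h)] with i hi
      exact iff_of_false (interior_subset hi) (interior_subset h)
  filter_upwards [eventually_all.2 hj] with i hi
  simp only [filter_map, card_map]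
  exact congrArg card (filter_congr fun j _ => hi j)

end Multiset

namespace Polynomial

section ContinuityOfRoots

variable {ι : Type*} {l : Filter ι}

theorem tendsto_eval_of_tendsto_coeff {R : Type*} [CommSemiring R] [TopologicalSpace R]
    [IsTopologicalSemiring R] {p : ι → R[X]} {q : R[X]} {n : ℕ}
    (hp : ∀ᶠ i in l, (p i).natDegree ≤ n) (hq : q.natDegree ≤ n)
    (hcoeff : ∀ k, Tendsto (fun i => (p i).coeff k) l (𝓝 (q.coeff k))) (z : R) :
    Tendsto (fun i => (p i).eval z) l (𝓝 (q.eval z)) := by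
  rw [eval_eq_sum_range' (Nat.lt_succ_of_le hq)]
  refine Tendsto.congr' ?_ (tendsto_finsetSum _ fun k _ => (hcoeff k).mul_const (z ^ k))
  filter_upwards [hp] with i hi
  rw [eval_eq_sum_range' (Nat.lt_succ_of_le hi)]

theorem tendsto_cauchyBound {K : Type*} [NormedDivisionRing K] {p : ι → K[X]} {q : K[X]}
    (hp : ∀ᶠ i in l, (p i).natDegree = q.natDegree) (hq : q ≠ 0)
    (hcoeff : ∀ k, Tendsto (fun i => (p i).coeff k) l (𝓝 (q.coeff k))) :
    Tendsto (fun i => cauchyBound (p i)) l (𝓝 (cauchyBound q)) := by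
  have hlc : Tendsto (fun i => ‖(p i).coeff q.natDegree‖₊) l (𝓝 ‖q.leadingCoeff‖₊) :=
    (hcoeff _).nnnorm
  refine (((Tendsto.finset_sup_nhds_apply fun k _ => (hcoeff k).nnnorm).div hlc
    (by simpa using hq)).add_const 1).congr' ?_
  filter_upwards [hp] with i hi
  simp only [cauchyBound, leadingCoeff, hi, Pi.div_apply]

theorem roots_eq_map_univ_of_tendsto {K : Type*} [NormedField K] [Infinite K] [l.NeBot]
    {p : ι → K[X]} {q : K[X]} {n : ℕ} (hp : ∀ i, (p i).natDegree = n) (hq : q.natDegree = n)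
    (hq0 : q ≠ 0) (hcoeff : ∀ k, Tendsto (fun i => (p i).coeff k) l (𝓝 (q.coeff k)))
    {x : ι → Fin n → K} (hx : ∀ i, (p i).roots = univ.val.map (x i)) {v : Fin n → K}
    (hv : Tendsto x l (𝓝 v)) :
    q.roots = univ.val.map v := by
  suffices hfac : q = C q.leadingCoeff * ((univ.val.map v).map (X - C ·)).prod by
    rw [hfac, roots_C_mul _ (leadingCoeff_ne_zero.2 hq0), roots_multiset_prod_X_sub_C]
  refine Polynomial.funext fun z => tendsto_nhds_unique
    (tendsto_eval_of_tendsto_coeff (.of_forall fun i => (hp i).le) hq.le hcoeff z) ?_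
  have hfac : ∀ i, p i = C (p i).leadingCoeff * ((univ.val.map (x i)).map (X - C ·)).prod :=
    fun i => by
      conv_lhs => rw [← C_leadingCoeff_mul_prod_multiset_X_sub_C (p := p i) (by simp [hx, hp])]
      rw [hx]
  simp_rw [fun i => congrArg (eval z) (hfac i), eval_mul, eval_C, eval_multiset_prod,
    Multiset.map_map, Function.comp_def, eval_sub, eval_X, eval_C, ← prod_eq_multiset_prod,
    leadingCoeff, hp, ← hq]
  exact (hcoeff _).mul (tendsto_finsetProd _ fun j _ =>
    tendsto_const_nhds.sub (tendsto_pi_nhds.1 hv j))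

theorem eventually_card_roots_filter_eq [l.IsCountablyGenerated] {p : ι → ℂ[X]} {q : ℂ[X]}
    (hp : ∀ᶠ i in l, (p i).natDegree ≤ q.natDegree) (hq : q ≠ 0)
    (hcoeff : ∀ k, Tendsto (fun i => (p i).coeff k) l (𝓝 (q.coeff k)))
    {U : Set ℂ} [DecidablePred (· ∈ U)] (hU : ∀ z ∈ frontier U, ¬ q.IsRoot z) :
    ∀ᶠ i in l, Multiset.card ((p i).roots.filter (· ∈ U)) =
      Multiset.card (q.roots.filter (· ∈ U)) := by
  set n := q.natDegree
  have hdeg : ∀ᶠ i in l, (p i).natDegree = n := by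
    filter_upwards [hp, (hcoeff n).eventually_ne (leadingCoeff_ne_zero.2 hq)] with i hi hne
    exact natDegree_eq_of_le_of_coeff_ne_zero hi hne
  have hbound : ∀ᶠ i in l, cauchyBound (p i) < cauchyBound q + 1 :=
    (tendsto_cauchyBound hdeg hq hcoeff).eventually_lt_const (lt_add_one _)
  -- Otherwise a subsequence of root vectors, bounded by Cauchy's bound, converges to the roots
  -- of `q`, none of which lies on `frontier U`.
  by_contra hne
  obtain ⟨ns, hns, hbad⟩ :=
    exists_seq_forall_of_frequently ((not_eventually.1 hne).and_eventually (hdeg.and hbound))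
  choose x hx using fun k => Multiset.exists_eq_map_univ_of_card_eq (p (ns k)).roots
    (IsAlgClosed.card_roots_eq_natDegree.trans (hbad k).2.1)
  have hxB : ∀ k, x k ∈ Metric.closedBall (0 : Fin n → ℂ) (cauchyBound q + 1) := fun k => by
    rw [mem_closedBall_zero_iff, pi_norm_le_iff_of_nonneg (by positivity)]
    intro j
    obtain ⟨hp0, hroot⟩ := mem_roots'.1 (hx k ▸ Multiset.mem_map_of_mem _ (mem_univ j))
    exact_mod_cast ((hroot.norm_lt_cauchyBound hp0).trans (hbad k).2.2).le
  obtain ⟨v, -, φ, hφ, hv⟩ := (isCompact_closedBall _ _).tendsto_subseq hxB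
  have hqv : q.roots = univ.val.map v :=
    roots_eq_map_univ_of_tendsto (p := fun k => p (ns (φ k))) (fun k => (hbad (φ k)).2.1) rfl hq
      (fun k => (hcoeff k).comp (hns.comp hφ.tendsto_atTop)) (fun k => hx (φ k)) hv
  have hvU : ∀ j, v j ∉ frontier U := fun j hj =>
    hU _ hj (mem_roots'.1 (hqv ▸ Multiset.mem_map_of_mem _ (mem_univ j))).2
  obtain ⟨k, hk⟩ := (Multiset.eventually_card_filter_map_univ_eq hv hvU).exists
  exact (hbad (φ k)).1 (by rw [hx, hqv]; exact hk)

theorem card_roots_filter_eq_of_isPreconnected {T : Type*} [TopologicalSpace T]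
    [FirstCountableTopology T] {s : Set T} (hs : IsPreconnected s) {p : T → ℂ[X]} {n : ℕ}
    (hcoeff : ∀ k, ContinuousOn (fun t => (p t).coeff k) s) (hdeg : ∀ t ∈ s, (p t).degree = n)
    {U : Set ℂ} [DecidablePred (· ∈ U)] (hU : ∀ t ∈ s, ∀ z ∈ frontier U, ¬ (p t).IsRoot z)
    {t₁ t₂ : T} (h₁ : t₁ ∈ s) (h₂ : t₂ ∈ s) :
    Multiset.card ((p t₁).roots.filter (· ∈ U)) =
      Multiset.card ((p t₂).roots.filter (· ∈ U)) := by
  refine hs.constant (f := fun t => Multiset.card ((p t).roots.filter (· ∈ U)))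
    (fun t ht => tendsto_nhds_of_eventually_eq ?_) h₁ h₂
  have hp0 : p t ≠ 0 := fun h => by simpa [h] using hdeg t ht
  refine eventually_card_roots_filter_eq ?_ hp0 (fun k => hcoeff k t ht) (hU t ht)
  filter_upwards [self_mem_nhdsWithin] with t' ht'
  rw [natDegree_eq_of_degree_eq_some (hdeg t' ht'), natDegree_eq_of_degree_eq_some (hdeg t ht)]

end ContinuityOfRoots

section Majorant

variable {K : Type*} [NormedField K]

theorem norm_eval_le_sum_norm_mul_pow (A : K[X]) (z : K) :
    ‖A.eval z‖ ≤ A.sum fun i c => ‖c‖ * ‖z‖ ^ i := by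
  rw [eval_eq_sum, sum_def, sum_def]
  refine (norm_sum_le _ _).trans_eq ?_
  simp only [norm_mul, norm_pow]

theorem norm_coeff_mul_pow_le_sum (A : K[X]) {ρ : ℝ} (hρ : 0 ≤ ρ) (k : ℕ) :
    ‖A.coeff k‖ * ρ ^ k ≤ A.sum fun i c => ‖c‖ * ρ ^ i := by
  rw [sum_def]
  by_cases hk : k ∈ A.support
  · exact single_le_sum (f := fun i => ‖A.coeff i‖ * ρ ^ i) (fun i _ => by positivity) hk
  · rw [notMem_support_iff.1 hk, norm_zero, zero_mul]
    exact sum_nonneg fun i _ => by positivity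

theorem sum_norm_mul_pow_sum_C_mul_X_pow (a : ℕ → K) (n : ℕ) (ρ : ℝ) :
    ((∑ i ∈ range (n + 1), C (a i) * X ^ i).sum fun i c => ‖c‖ * ρ ^ i) =
      ∑ i ∈ range (n + 1), ‖a i‖ * ρ ^ i := by
  rw [sum_over_range' _ (fun i => by simp) (n + 1)]
  · refine sum_congr rfl fun i hi => ?_
    simp [finsetSum_coeff, mem_range.1 hi]
  · refine Nat.lt_succ_of_le (natDegree_sum_le_of_forall_le _ _ fun i hi => ?_)
    exact (natDegree_C_mul_X_pow_le _ _).trans (Nat.le_of_lt_succ (mem_range.1 hi))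

theorem norm_mul_eval_add_mul_coeff_mul_pow_le (A : ℂ[X]) (N : ℕ) {t : ℝ}
    (ht : t ∈ Set.Icc (0 : ℝ) 1) (z : ℂ) :
    ‖(t : ℂ) * A.eval z + (1 - (t : ℂ)) * (A.coeff N * z ^ N)‖ ≤
      A.sum fun i c => ‖c‖ * ‖z‖ ^ i := by
  set B := A.sum fun i c => ‖c‖ * ‖z‖ ^ i
  have hc : ‖A.coeff N * z ^ N‖ ≤ B := by
    rw [norm_mul, norm_pow]
    exact norm_coeff_mul_pow_le_sum A (norm_nonneg z) N
  calc _ ≤ t * ‖A.eval z‖ + (1 - t) * ‖A.coeff N * z ^ N‖ := by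
        refine (norm_add_le _ _).trans_eq ?_
        rw [norm_mul, norm_mul, Complex.norm_of_nonneg ht.1, ← Complex.ofReal_one,
          ← Complex.ofReal_sub, Complex.norm_of_nonneg (sub_nonneg.2 ht.2)]
    _ ≤ t * B + (1 - t) * B :=
        add_le_add (mul_le_mul_of_nonneg_left (norm_eval_le_sum_norm_mul_pow A z) ht.1)
          (mul_le_mul_of_nonneg_left hc (sub_nonneg.2 ht.2))
    _ = B := by ring

end Majorant

theorem degree_sub_C_coeff_mul_X_pow_lt {R : Type*} [Ring R] (A : R[X]) {N : ℕ}
    (hA : A.natDegree ≤ N) : (A - C (A.coeff N) * X ^ N).degree < (N : WithBot ℕ) := by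
  refine (degree_lt_iff_coeff_zero _ _).2 fun k hk => ?_
  rcases hk.lt_or_eq with hk | rfl
  · rw [coeff_sub, coeff_C_mul_X_pow, if_neg hk.ne', coeff_eq_zero_of_natDegree_lt (hA.trans_lt hk),
      sub_zero]
  · simp

theorem card_roots_X_pow_sub_C_mul_X_pow_filter_norm_lt {S N : ℕ} (hSN : S ≤ N) {c : ℂ} {ρ : ℝ}
    (hρ : 0 < ρ) (hc : ‖c‖ * ρ ^ N < ρ ^ S) :
    Multiset.card ((X ^ S - C c * X ^ N).roots.filter (fun z => ‖z‖ < ρ)) = S := by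
  have hc' : ‖c‖ * ρ ^ (N - S) < 1 := by
    rw [← Nat.sub_add_cancel hSN, pow_add, ← mul_assoc] at hc
    exact (mul_lt_iff_lt_one_left (by positivity)).1 hc
  have hQ : ∀ z : ℂ, ‖z‖ ≤ ρ → (1 - C c * X ^ (N - S)).eval z ≠ 0 := by
    intro z hz h
    rw [eval_sub, eval_one, eval_mul, eval_C, eval_pow, eval_X, sub_eq_zero] at h
    have : ‖c * z ^ (N - S)‖ < 1 := by
      rw [norm_mul, norm_pow]
      exact (mul_le_mul_of_nonneg_left (pow_le_pow_left₀ (norm_nonneg z) hz _)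
        (norm_nonneg c)).trans_lt hc'
    rw [← h, norm_one] at this
    exact lt_irrefl _ this
  have hQ0 : (1 - C c * X ^ (N - S) : ℂ[X]) ≠ 0 := fun h =>
    hQ 0 (by simp [hρ.le]) (by rw [h, eval_zero])
  have hfac : X ^ S - C c * X ^ N = X ^ S * (1 - C c * X ^ (N - S)) := by
    rw [mul_sub, mul_one, mul_left_comm, ← pow_add, Nat.add_sub_cancel' hSN]
  rw [hfac, roots_mul (mul_ne_zero (pow_ne_zero _ X_ne_zero) hQ0), roots_X_pow,
    Multiset.filter_add, Multiset.card_add,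
    Multiset.filter_eq_self.2 (by simp [hρ]),
    Multiset.filter_eq_nil.2 (fun z hz h => hQ z h.le ((mem_roots hQ0).1 hz))]
  simp

theorem coeff_X_pow_sub_self_ne_zero (A : ℂ[X]) {S : ℕ} {ρ : ℝ} (hρ : 0 < ρ)
    (hA : (A.sum fun i c => ‖c‖ * ρ ^ i) < ρ ^ S) : (X ^ S - A).coeff S ≠ 0 := by
  have := (norm_coeff_mul_pow_le_sum A hρ.le S).trans_lt hA
  rw [mul_lt_iff_lt_one_left (by positivity)] at this
  rw [coeff_sub, coeff_X_pow_self, sub_ne_zero]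
  exact fun h => by simp [← h] at this

theorem card_roots_X_pow_sub_filter_norm_lt (A : ℂ[X]) (S : ℕ) {ρ : ℝ} (hρ : 0 < ρ)
    (hA : (A.sum fun i c => ‖c‖ * ρ ^ i) < ρ ^ S) :
    Multiset.card ((X ^ S - A).roots.filter (fun z => ‖z‖ < ρ)) = S := by
  classical
  set P : ℂ[X] := X ^ S - A
  set N := P.natDegree
  have hPS : P.coeff S ≠ 0 := coeff_X_pow_sub_self_ne_zero A hρ hA
  have hSN : S ≤ N := le_natDegree_of_ne_zero hPS
  have hPdeg : P.degree = N := degree_eq_natDegree fun h => hPS (by rw [h, coeff_zero])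
  have hAN : A.natDegree ≤ N := by
    rw [show A = X ^ S - P by simp [P]]
    exact (natDegree_sub_le_of_le ((natDegree_X_pow_le S).trans hSN) le_rfl).trans
      (max_self N).le
  set H : ℝ → ℂ[X] := fun t => P + (1 - (t : ℂ)) • (A - C (A.coeff N) * X ^ N)
  have hdeg : ∀ t, (H t).degree = N := fun t => by
    rw [degree_add_eq_left_of_degree_lt, hPdeg]
    exact (degree_smul_le _ _).trans_lt
      ((degree_sub_C_coeff_mul_X_pow_lt A hAN).trans_eq hPdeg.symm)
  have hroot : ∀ t ∈ Set.Icc (0 : ℝ) 1, ∀ z ∈ frontier (Metric.ball 0 ρ), ¬ (H t).IsRoot z := by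
    intro t ht z hz
    rw [frontier_ball _ hρ.ne', mem_sphere_zero_iff_norm] at hz
    have hsplit : (H t).eval z =
        z ^ S - ((t : ℂ) * A.eval z + (1 - (t : ℂ)) * (A.coeff N * z ^ N)) := by
      simp only [H, P, eval_add, eval_smul, eval_sub, eval_mul, eval_C, eval_pow, eval_X,
        smul_eq_mul]
      ring
    have hlt := (norm_mul_eval_add_mul_coeff_mul_pow_le A N ht z).trans_lt (hz ▸ hA)
    rw [IsRoot.def, hsplit, sub_eq_zero]
    exact fun h => hlt.ne (by rw [← h, norm_pow, hz])
  have hcoeff : ∀ k, ContinuousOn (fun t => (H t).coeff k) (Set.Icc 0 1) := fun k => by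
    simp only [H, coeff_add, coeff_smul, smul_eq_mul]
    fun_prop
  have h := card_roots_filter_eq_of_isPreconnected isPreconnected_Icc hcoeff (fun t _ => hdeg t)
    hroot (Set.left_mem_Icc.2 zero_le_one) (Set.right_mem_Icc.2 zero_le_one)
  have hH0 : H 0 = X ^ S - C (A.coeff N) * X ^ N := by
    simp only [H, P, Complex.ofReal_zero, sub_zero, one_smul]
    ring
  have hH1 : H 1 = P := by simp [H]
  simp only [hH0, hH1, mem_ball_zero_iff] at h
  rw [← h, card_roots_X_pow_sub_C_mul_X_pow_filter_norm_lt hSN hρ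
    ((norm_coeff_mul_pow_le_sum A hρ.le N).trans_lt hA)]

end Polynomial

theorem eventually_sum_mul_pow_lt_pow {s : Finset ℕ} {a : ℕ → ℝ} {S : ℕ}
    (ha_sum : ∑ i ∈ s, a i = 1) (ha_mean : ∑ i ∈ s, (i : ℝ) * a i < S) :
    ∀ᶠ ρ in 𝓝[>] 1, ∑ i ∈ s, a i * ρ ^ i < ρ ^ S := by
  set g : ℝ → ℝ := fun ρ => ρ ^ S - ∑ i ∈ s, a i * ρ ^ i
  have hg : deriv g 1 = S - ∑ i ∈ s, (i : ℝ) * a i := by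
    rw [((hasDerivAt_pow S 1).fun_sub (HasDerivAt.fun_sum (u := s) fun i _ =>
      (hasDerivAt_pow i 1).const_mul (a i))).deriv]
    simp [mul_comm]
  have hg1 : g 1 = 0 := by simp [g, ha_sum]
  filter_upwards [nhdsWithin_le_nhds (eventually_nhdsWithin_sign_eq_of_deriv_pos
    (hg ▸ sub_pos.2 ha_mean) hg1), self_mem_nhdsWithin] with ρ hsign hρ
  rw [sign_pos (sub_pos.2 (Set.mem_Ioi.1 hρ)), sign_eq_one_iff] at hsign
  exact sub_pos.1 hsign

theorem roots_in_closed_unit_disc_general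
    (S M : ℕ) (a : ℕ → ℝ)
    (ha_nonneg : ∀ i ∈ Finset.range (M + 1), 0 ≤ a i)
    (ha_sum : ∑ i ∈ Finset.range (M + 1), a i = 1)
    (ha_mean : ∑ i ∈ Finset.range (M + 1), (i : ℝ) * a i < S) :
    Multiset.card
      (((X ^ S - ∑ i ∈ Finset.range (M + 1), C ((a i : ℂ)) * X ^ i : Polynomial ℂ).roots).filter
        (fun z => ‖z‖ ≤ 1)) = S := by
  set A : ℂ[X] := ∑ i ∈ Finset.range (M + 1), C ((a i : ℂ)) * X ^ i
  have hA : ∀ ρ, (A.sum fun i c => ‖c‖ * ρ ^ i) = ∑ i ∈ Finset.range (M + 1), a i * ρ ^ i :=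
    fun ρ => by
      rw [sum_norm_mul_pow_sum_C_mul_X_pow]
      exact sum_congr rfl fun i hi => by rw [Complex.norm_of_nonneg (ha_nonneg i hi)]
  obtain ⟨ρ, ⟨hρA, hρfilter⟩, hρ1⟩ := (((eventually_sum_mul_pow_lt_pow ha_sum ha_mean).and
    ((X ^ S - A).roots.eventually_filter_lt_eq_filter_le (‖·‖) 1)).and self_mem_nhdsWithin).exists
  rw [← hρfilter]
  exact card_roots_X_pow_sub_filter_norm_lt A S (zero_lt_one.trans hρ1) (hA ρ ▸ hρA)

/-- For S ≥ 1, nonnegative a_0,…,a_M summing to 1 with mean Σ i·a_i < S,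
the polynomial P(z) = z^S − Σ_{i=0}^{M} a_i z^i has exactly S roots (with multiplicity)
in the closed unit disc of ℂ. -/
theorem roots_in_closed_unit_disc
    (S M : ℕ) (hS : 1 ≤ S) (a : ℕ → ℝ)
    (ha_nonneg : ∀ i ∈ Finset.range (M + 1), 0 ≤ a i)
    (ha_sum : ∑ i ∈ Finset.range (M + 1), a i = 1)
    (ha_mean : ∑ i ∈ Finset.range (M + 1), (i : ℝ) * a i < S) :
    Multiset.card
      (((X ^ S - ∑ i ∈ Finset.range (M + 1), C ((a i : ℂ)) * X ^ i : Polynomial ℂ).roots).filter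
        (fun z => ‖z‖ ≤ 1)) = S :=
  roots_in_closed_unit_disc_general S M a ha_nonneg ha_sum ha_mean
end

section
/- Let S ≥ 1 and M be natural numbers and let a_0, …, a_M be nonnegative real numbers with Σ_{i=0}^{M} a_i = 1 and Σ_{i=0}^{M} i·a_i < S. Assume additionally the aperiodicity condition that the greatest common divisor of the natural numbers |S − i|, taken over all indices i ∈ {0, …, M} with a_i > 0, equals 1. Then the only root of the complex polynomial P(z) = z^S − Σ_{i=0}^{M} a_i z^i on the unit circle {z : |z| = 1} is z = 1, and P has exactly S − 1 roots, counted with multiplicity, in the open unit disc {z ∈ ℂ : |z| < 1}. -/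
/-!
On the circle `|z| = ρ`, for `ρ > 1` close enough to `1`, the stability condition `A'(1) < S`
gives `|A(z)| ≤ A(ρ) < ρ^S = |z^S|`, so by Rouché's theorem `z^S - A(z)` has exactly `S` roots
in `|z| < ρ`, and for `ρ` close to `1` these are the roots with `|z| ≤ 1`. On `|z| = 1`, the
identity `z^S = ∑ aᵢ zⁱ` writes a point of the unit circle as a convex combination of points
of the closed disc, which forces `zⁱ = z^S` whenever `aᵢ > 0`; by aperiodicity the order of
`z` divides `1`. Finally `z = 1` is a simple root, since the derivative there is
`S - A'(1) ≠ 0`.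

Rouché's theorem for polynomials is proved by the argument principle: the logarithmic
derivative of `p` is `∑ 1 / (z - r)` over the roots, and `log (p / q)` is a primitive of
`p'/p - q'/q` along the circle, where `p / q` stays in the disc `|w - 1| < 1`.
-/

open Polynomial Complex Metric Set Real Filter Topology

theorem circleIntegral_sub_inv_of_notMem_closedBall {c w : ℂ} {R : ℝ} (hR : 0 ≤ R)
    (hw : w ∉ closedBall c R) : ∮ z in C(c, R), (z - w)⁻¹ = 0 := by
  have hd : DifferentiableOn ℂ (fun z => (z - w)⁻¹) {w}ᶜ := fun z hz =>
    ((differentiableAt_id.sub_const w).inv (sub_ne_zero.2 hz)).differentiableWithinAt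
  exact (hd.diffContOnCl_ball fun z hz h => hw (h ▸ hz)).circleIntegral_eq_zero hR

theorem circleIntegral_sub_inv {c w : ℂ} {R : ℝ} (hR : 0 ≤ R) (hw : w ∉ sphere c R) :
    ∮ z in C(c, R), (z - w)⁻¹ = if dist w c < R then 2 * π * I else 0 := by
  split_ifs with hb
  · exact circleIntegral.integral_sub_inv_of_mem_ball hb
  · refine circleIntegral_sub_inv_of_notMem_closedBall hR fun hc => ?_
    rw [← ball_union_sphere] at hc
    exact hc.elim hb hw

theorem circleIntegral_multiset_sum_one_div_sub {c : ℂ} {R : ℝ} (hR : 0 ≤ R) (t : Multiset ℂ)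
    (ht : ∀ w ∈ t, w ∉ sphere c R) :
    ∮ z in C(c, R), (t.map fun w => 1 / (z - w)).sum
      = 2 * π * I * (t.filter fun w => dist w c < R).card := by
  induction t using Multiset.induction_on with
  | empty => simp [circleIntegral]
  | cons w t ih =>
    rw [Multiset.forall_mem_cons] at ht
    have hcont : ∀ w ∉ sphere c R, ContinuousOn (fun z => 1 / (z - w)) (sphere c R) :=
      fun w hw => continuousOn_const.div (continuousOn_id.sub continuousOn_const)
        fun z hz => sub_ne_zero.2 fun h => hw (h ▸ hz)
    have hsum : CircleIntegrable (fun z => (t.map fun w => 1 / (z - w)).sum) c R :=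
      (continuousOn_multiset_sum t fun w hw => hcont w (ht.2 w hw)).circleIntegrable hR
    simp only [Multiset.map_cons, Multiset.sum_cons]
    rw [circleIntegral.integral_add ((hcont w ht.1).circleIntegrable hR) hsum, ih ht.2]
    simp only [one_div, circleIntegral_sub_inv hR ht.1]
    by_cases hw : dist w c < R
    · rw [if_pos hw, Multiset.filter_cons_of_pos (p := fun w => dist w c < R) _ hw,
        Multiset.card_cons]
      push_cast
      ring
    · rw [if_neg hw, Multiset.filter_cons_of_neg (p := fun w => dist w c < R) _ hw, zero_add]

theorem circleIntegral_logDeriv_eq_zero_of_mapsTo_slitPlane {f : ℂ → ℂ} {c : ℂ} {R : ℝ}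
    (hR : 0 ≤ R) (hf : ∀ z ∈ sphere c R, DifferentiableAt ℂ f z)
    (hslit : MapsTo f (sphere c R) slitPlane) : ∮ z in C(c, R), logDeriv f z = 0 :=
  circleIntegral.integral_eq_zero_of_hasDerivWithinAt hR fun z hz =>
    ((hf z hz).hasDerivAt.clog (hslit hz)).hasDerivWithinAt

namespace Polynomial

theorem continuousOn_logDeriv_eval (p : ℂ[X]) {s : Set ℂ} (hp : ∀ z ∈ s, p.eval z ≠ 0) :
    ContinuousOn (logDeriv fun z => p.eval z) s := by
  refine (p.derivative.continuousOn.div p.continuousOn hp).congr fun z _ => ?_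
  rw [logDeriv_apply, Polynomial.deriv, Pi.div_apply]

theorem circleIntegral_logDeriv_eval (p : ℂ[X]) {c : ℂ} {R : ℝ} (hR : 0 ≤ R)
    (hp : ∀ z ∈ sphere c R, p.eval z ≠ 0) :
    ∮ z in C(c, R), logDeriv (fun z => p.eval z) z
      = 2 * π * I * (p.roots.filter fun w => dist w c < R).card := by
  rw [← circleIntegral_multiset_sum_one_div_sub hR p.roots
    fun w hw hwc => hp w hwc ((mem_roots'.1 hw).2)]
  refine circleIntegral.integral_congr hR fun z hz => ?_
  rw [logDeriv_apply, Polynomial.deriv,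
    (IsAlgClosed.splits p).eval_derivative_div_eval_of_ne_zero (hp z hz)]

/-- Rouché's theorem for polynomials. -/
theorem card_roots_filter_dist_lt_eq_of_norm_sub_lt {p q : ℂ[X]} {c : ℂ} {R : ℝ}
    (h : ∀ z ∈ sphere c R, ‖p.eval z - q.eval z‖ < ‖q.eval z‖) :
    (p.roots.filter fun w => dist w c < R).card = (q.roots.filter fun w => dist w c < R).card := by
  rcases lt_or_ge R 0 with hR | hR
  · have hempty : ∀ w : ℂ, ¬ dist w c < R := fun w hw => (dist_nonneg.trans_lt hw).not_ge hR.le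
    simp [hempty]
  have hq : ∀ z ∈ sphere c R, q.eval z ≠ 0 := fun z hz hq0 =>
    (norm_nonneg _).not_gt (by simpa [hq0] using h z hz)
  have hp : ∀ z ∈ sphere c R, p.eval z ≠ 0 := fun z hz hp0 => by
    simpa [hp0] using h z hz
  have hslit : MapsTo (fun z => p.eval z / q.eval z) (sphere c R) slitPlane := fun z hz => by
    refine ball_one_subset_slitPlane ?_
    rw [mem_ball, dist_eq_norm, div_sub_one (hq z hz), norm_div,
      div_lt_one (norm_pos_iff.2 (hq z hz))]
    exact h z hz
  have hquot := circleIntegral_logDeriv_eq_zero_of_mapsTo_slitPlane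
    (f := fun z => p.eval z / q.eval z) hR
    (fun z hz => p.differentiableAt.div q.differentiableAt (hq z hz)) hslit
  rw [circleIntegral.integral_congr hR fun z hz => logDeriv_div z (hp z hz) (hq z hz)
    p.differentiableAt q.differentiableAt, circleIntegral.integral_sub
    ((p.continuousOn_logDeriv_eval hp).circleIntegrable hR)
    ((q.continuousOn_logDeriv_eval hq).circleIntegrable hR),
    p.circleIntegral_logDeriv_eval hR hp, q.circleIntegral_logDeriv_eval hR hq, sub_eq_zero,
    mul_right_inj' (by simp [pi_ne_zero])] at hquot
  exact_mod_cast hquot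

theorem rootMultiplicity_eq_one_of_isRoot_of_not_isRoot_derivative {R : Type*} [CommRing R]
    {p : R[X]} {t : R} (hp : p.IsRoot t) (hd : ¬ p.derivative.IsRoot t) :
    p.rootMultiplicity t = 1 := by
  have hp0 : p ≠ 0 := by
    rintro rfl
    simp at hd
  have hpos := (rootMultiplicity_pos hp0).2 hp
  have hle := mt (one_lt_rootMultiplicity_iff_isRoot hp0).1 fun h => hd h.2
  omega

theorem card_roots_filter_norm_lt_one_add_rootMultiplicity_one {P : ℂ[X]} {ρ : ℝ}
    (hρ : 1 < ρ) (hgap : ∀ r ∈ P.roots, ‖r‖ ∉ Set.Ioo 1 ρ)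
    (hcircle : ∀ r ∈ P.roots, ‖r‖ = 1 → r = 1) :
    (P.roots.filter fun r => ‖r‖ < 1).card + P.rootMultiplicity 1
      = (P.roots.filter fun r => dist r 0 < ρ).card := by
  have hsplit := Multiset.filter_add_filter (fun r => ‖r‖ < 1) (fun r => 1 = r) P.roots
  have hdisj : P.roots.filter (fun r => ‖r‖ < 1 ∧ 1 = r) = 0 :=
    Multiset.filter_eq_nil.2 fun r _ ⟨hr, h1⟩ => by simp [← h1] at hr
  have hball : P.roots.filter (fun r => ‖r‖ < 1 ∨ 1 = r)
      = P.roots.filter (fun r => dist r 0 < ρ) := by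
    refine Multiset.filter_congr fun r hr => ?_
    rw [dist_zero_right]
    constructor
    · rintro (h | rfl)
      · exact h.trans hρ
      · simpa using hρ
    · intro h
      rcases (not_lt.1 fun h1 => hgap r hr ⟨h1, h⟩).lt_or_eq with h | h
      · exact Or.inl h
      · exact Or.inr (hcircle r hr h).symm
  rw [← count_roots, Multiset.count_eq_card_filter_eq, ← Multiset.card_add, hsplit, hdisj, hball,
    add_zero]

end Polynomial

theorem Finset.eventually_nhdsGT_forall_notMem_Ioo {α : Type*} [LinearOrder α]
    [TopologicalSpace α] [OrderTopology α] (s : Finset α) (x : α) :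
    ∀ᶠ y in 𝓝[>] x, ∀ r ∈ s, r ∉ Set.Ioo x y := by
  refine (eventually_all_finset s).2 fun r _ => ?_
  by_cases hxr : x < r
  · filter_upwards [nhdsWithin_le_nhds (eventually_lt_nhds hxr)] with y hy hr using hr.2.asymm hy
  · exact Eventually.of_forall fun y hr => hxr hr.1

theorem eq_one_of_pow_eq_pow_of_gcd_eq_one {G : Type*} [LeftCancelMonoid G] {x : G} {S : ℕ}
    {s : Finset ℕ} (hpow : ∀ i ∈ s, x ^ i = x ^ S)
    (hgcd : s.gcd (fun i => ((S : ℤ) - i).natAbs) = 1) : x = 1 := by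
  have hdvd : orderOf x ∣ s.gcd (fun i => ((S : ℤ) - i).natAbs) := Finset.dvd_gcd fun i hi =>
    Int.natCast_dvd.1 (Nat.modEq_iff_dvd.1 (pow_eq_pow_iff_modEq.1 (hpow i hi)))
  rwa [hgcd, Nat.dvd_one, orderOf_eq_one_iff] at hdvd

theorem Complex.eq_one_of_norm_le_one_of_re_eq_one {w : ℂ} (hw : ‖w‖ ≤ 1) (hre : w.re = 1) :
    w = 1 := by
  have hnorm : w.re = ‖w‖ := le_antisymm (re_le_norm w) (hre ▸ hw)
  have him : w.im = 0 := abs_re_eq_norm.1 (by rw [hre, abs_one, ← hnorm, hre])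
  exact Complex.ext hre him

theorem Complex.eq_one_of_sum_mul_eq_one {ι : Type*} {s : Finset ι} {a : ι → ℝ} {w : ι → ℂ}
    (ha : ∀ i ∈ s, 0 ≤ a i) (ha_sum : ∑ i ∈ s, a i = 1) (hw : ∀ i ∈ s, ‖w i‖ ≤ 1)
    (hsum : ∑ i ∈ s, (a i : ℂ) * w i = 1) {i : ι} (hi : i ∈ s) (hai : 0 < a i) : w i = 1 := by
  have hle : ∀ j ∈ s, a j * (w j).re ≤ a j := fun j hj =>
    mul_le_of_le_one_right (ha j hj) ((re_le_norm _).trans (hw j hj))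
  have hre : ∑ j ∈ s, a j * (w j).re = ∑ j ∈ s, a j := by
    rw [ha_sum]
    simpa [re_sum] using congrArg re hsum
  have hi_eq := (Finset.sum_eq_sum_iff_of_le hle).1 hre i hi
  exact eq_one_of_norm_le_one_of_re_eq_one (hw i hi) ((mul_eq_left₀ hai.ne').1 hi_eq)

/-- The generating function `A(z) = ∑ aᵢ zⁱ` of the arrivals per frame. -/
noncomputable def arrivalPGF {R : Type*} [Semiring R] (M : ℕ) (a : ℕ → R) : R[X] :=
  ∑ i ∈ Finset.range (M + 1), C (a i) * X ^ i

section CommRing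

variable {R : Type*} [CommRing R] {S M : ℕ} {a : ℕ → R}

theorem eval_arrivalPGF (x : R) :
    (arrivalPGF M a).eval x = ∑ i ∈ Finset.range (M + 1), a i * x ^ i := by
  simp [arrivalPGF, eval_finsetSum]

theorem eval_one_X_pow_sub_arrivalPGF :
    (X ^ S - arrivalPGF M a).eval 1 = 1 - ∑ i ∈ Finset.range (M + 1), a i := by
  simp [eval_arrivalPGF]

theorem eval_one_derivative_X_pow_sub_arrivalPGF :
    (derivative (X ^ S - arrivalPGF M a)).eval 1
      = S - ∑ i ∈ Finset.range (M + 1), (i : R) * a i := by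
  simp only [arrivalPGF, derivative_sub, derivative_X_pow, derivative_sum, derivative_C_mul_X_pow,
    eval_sub, eval_finsetSum, eval_mul, eval_C, eval_pow, eval_X, one_pow, mul_one]
  exact congrArg _ (Finset.sum_congr rfl fun i _ => mul_comm _ _)

theorem rootMultiplicity_one_X_pow_sub_arrivalPGF
    (ha_sum : ∑ i ∈ Finset.range (M + 1), a i = 1)
    (ha_mean : ∑ i ∈ Finset.range (M + 1), (i : R) * a i ≠ S) :
    (X ^ S - arrivalPGF M a).rootMultiplicity 1 = 1 :=
  rootMultiplicity_eq_one_of_isRoot_of_not_isRoot_derivative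
    (by rw [IsRoot, eval_one_X_pow_sub_arrivalPGF, ha_sum, sub_self])
    (by rw [IsRoot, eval_one_derivative_X_pow_sub_arrivalPGF, sub_eq_zero]; exact ha_mean.symm)

end CommRing

section RealCoefficients

variable {S M : ℕ} {a : ℕ → ℝ}

theorem norm_eval_arrivalPGF_le (ha : ∀ i ∈ Finset.range (M + 1), 0 ≤ a i) (z : ℂ) :
    ‖(arrivalPGF M fun i => (a i : ℂ)).eval z‖ ≤ (arrivalPGF M a).eval ‖z‖ := by
  rw [eval_arrivalPGF, eval_arrivalPGF]
  refine (norm_sum_le _ _).trans_eq (Finset.sum_congr rfl fun i hi => ?_)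
  rw [norm_mul, norm_pow, norm_real, Real.norm_of_nonneg (ha i hi)]

theorem eventually_eval_arrivalPGF_lt_pow (ha_sum : ∑ i ∈ Finset.range (M + 1), a i = 1)
    (ha_mean : ∑ i ∈ Finset.range (M + 1), (i : ℝ) * a i < S) :
    ∀ᶠ ρ in 𝓝[>] 1, (arrivalPGF M a).eval ρ < ρ ^ S := by
  have h1 : (X ^ S - arrivalPGF M a).eval 1 = 0 := by
    rw [eval_one_X_pow_sub_arrivalPGF, ha_sum, sub_self]
  have hd : 0 < deriv (fun x => (X ^ S - arrivalPGF M a).eval x) 1 := by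
    rwa [Polynomial.deriv, eval_one_derivative_X_pow_sub_arrivalPGF, sub_pos]
  filter_upwards [nhdsWithin_le_nhds (eventually_nhdsWithin_sign_eq_of_deriv_pos hd h1),
    self_mem_nhdsWithin] with ρ hsign hρ
  rw [sign_pos (sub_pos.2 hρ), sign_eq_one_iff, eval_sub, eval_pow, eval_X, sub_pos] at hsign
  exact hsign

theorem eq_one_of_eval_arrivalPGF_eq_pow (ha_nonneg : ∀ i ∈ Finset.range (M + 1), 0 ≤ a i)
    (ha_sum : ∑ i ∈ Finset.range (M + 1), a i = 1)
    (h_aper : ((Finset.range (M + 1)).filter (fun i => 0 < a i)).gcd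
        (fun i => ((S : ℤ) - (i : ℤ)).natAbs) = 1)
    {z : ℂ} (hz : ‖z‖ = 1) (hroot : (arrivalPGF M fun i => (a i : ℂ)).eval z = z ^ S) :
    z = 1 := by
  have hz0 : z ≠ 0 := norm_ne_zero_iff.1 (by rw [hz]; exact one_ne_zero)
  have hzS : z ^ S ≠ 0 := pow_ne_zero S hz0
  have hcomb : ∑ i ∈ Finset.range (M + 1), (a i : ℂ) * (z ^ i / z ^ S) = 1 := by
    simp only [← mul_div_assoc, ← Finset.sum_div, ← eval_arrivalPGF, hroot, div_self hzS]
  have hpow : ∀ i ∈ (Finset.range (M + 1)).filter (fun i => 0 < a i), z ^ i = z ^ S := by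
    intro i hi
    rw [Finset.mem_filter] at hi
    refine (div_eq_one_iff_eq hzS).1 (Complex.eq_one_of_sum_mul_eq_one ha_nonneg ha_sum
      (fun j _ => ?_) hcomb hi.1 hi.2)
    simp [hz]
  have hunit := eq_one_of_pow_eq_pow_of_gcd_eq_one (x := Units.mk0 z hz0)
    (fun i hi => Units.ext (by simpa using hpow i hi)) h_aper
  simpa using congrArg Units.val hunit

end RealCoefficients

theorem roots_in_open_unit_disc_general
    (S M : ℕ) (a : ℕ → ℝ)
    (ha_nonneg : ∀ i ∈ Finset.range (M + 1), 0 ≤ a i)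
    (ha_sum : ∑ i ∈ Finset.range (M + 1), a i = 1)
    (ha_mean : ∑ i ∈ Finset.range (M + 1), (i : ℝ) * a i < S)
    (h_aper :
      ((Finset.range (M + 1)).filter (fun i => 0 < a i)).gcd
        (fun i => ((S : ℤ) - (i : ℤ)).natAbs) = 1) :
    (∀ z : ℂ, ‖z‖ = 1 →
        Polynomial.eval z
          (X ^ S - ∑ i ∈ Finset.range (M + 1), C ((a i : ℂ)) * X ^ i : Polynomial ℂ) = 0 →
        z = 1) ∧
    Multiset.card
      (((X ^ S - ∑ i ∈ Finset.range (M + 1), C ((a i : ℂ)) * X ^ i : Polynomial ℂ).roots).filter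
        (fun z => ‖z‖ < 1)) = S - 1 := by
  set P : ℂ[X] := X ^ S - arrivalPGF M fun i => (a i : ℂ)
  have hcircle : ∀ z : ℂ, ‖z‖ = 1 → P.eval z = 0 → z = 1 := fun z hz h0 =>
    eq_one_of_eval_arrivalPGF_eq_pow ha_nonneg ha_sum h_aper hz
      (by rw [eval_sub, sub_eq_zero] at h0; simpa using h0.symm)
  refine ⟨hcircle, ?_⟩
  change (P.roots.filter fun z => ‖z‖ < 1).card = S - 1
  obtain ⟨ρ, hρA, hρgap, hρ1⟩ := ((eventually_eval_arrivalPGF_lt_pow ha_sum ha_mean).and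
    (((P.roots.map (‖·‖)).toFinset.eventually_nhdsGT_forall_notMem_Ioo 1).and
      self_mem_nhdsWithin)).exists
  have hrouche : (P.roots.filter fun r => dist r 0 < ρ).card = S := by
    rw [card_roots_filter_dist_lt_eq_of_norm_sub_lt (q := X ^ S) fun z hz => ?_]
    · rw [roots_X_pow, Multiset.nsmul_singleton, Multiset.filter_eq_self.2 fun r hr => ?_,
        Multiset.card_replicate]
      simp [Multiset.eq_of_mem_replicate hr, zero_lt_one.trans hρ1]
    rw [mem_sphere_zero_iff_norm] at hz
    simpa [P, hz] using (norm_eval_arrivalPGF_le ha_nonneg z).trans_lt (hz ▸ hρA)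
  have hsimple : P.rootMultiplicity 1 = 1 := rootMultiplicity_one_X_pow_sub_arrivalPGF
    (by exact_mod_cast ha_sum) (by exact_mod_cast ha_mean.ne)
  have hcount := card_roots_filter_norm_lt_one_add_rootMultiplicity_one hρ1
    (fun r hr => hρgap _ (Multiset.mem_toFinset.2 (Multiset.mem_map_of_mem _ hr)))
    (fun r hr hr1 => hcircle r hr1 (mem_roots'.1 hr).2)
  omega

/-- Under the stability condition and the aperiodicity condition
(gcd of |S − i| over indices with a_i > 0 equals 1), the only root of
P(z) = z^S − Σ a_i z^i on the unit circle is z = 1, and P has exactly S − 1 roots,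
with multiplicity, strictly inside the unit disc. -/
theorem roots_in_open_unit_disc
    (S M : ℕ) (hS : 1 ≤ S) (a : ℕ → ℝ)
    (ha_nonneg : ∀ i ∈ Finset.range (M + 1), 0 ≤ a i)
    (ha_sum : ∑ i ∈ Finset.range (M + 1), a i = 1)
    (ha_mean : ∑ i ∈ Finset.range (M + 1), (i : ℝ) * a i < S)
    (h_aper :
      ((Finset.range (M + 1)).filter (fun i => 0 < a i)).gcd
        (fun i => ((S : ℤ) - (i : ℤ)).natAbs) = 1) :
    (∀ z : ℂ, ‖z‖ = 1 →
        Polynomial.eval z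
          (X ^ S - ∑ i ∈ Finset.range (M + 1), C ((a i : ℂ)) * X ^ i : Polynomial ℂ) = 0 →
        z = 1) ∧
    Multiset.card
      (((X ^ S - ∑ i ∈ Finset.range (M + 1), C ((a i : ℂ)) * X ^ i : Polynomial ℂ).roots).filter
        (fun z => ‖z‖ < 1)) = S - 1 :=
  roots_in_open_unit_disc_general S M a ha_nonneg ha_sum ha_mean h_aper
end

section
/- Fix an integer S ≥ 1. Let a : ℕ → ℝ with a_i ≥ 0 and Σ_{i=0}^{∞} a_i = 1, extended by a_k = 0 for k < 0, and let q : ℕ → ℝ with q_i ≥ 0 and Σ_{i=0}^{∞} q_i = 1 satisfy the balance equations q_j = a_j·(Σ_{i=0}^{S} q_i) + Σ_{i=S+1}^{∞} q_i·a_{j−i+S} for all j ∈ ℕ. Define A(z) = Σ_{i=0}^{∞} a_i z^i, Q(z) = Σ_{i=0}^{∞} q_i z^i, and N(z) = Σ_{i=0}^{S−1} q_i Σ_{l=i}^{S−1} z^l. Then for every z ∈ ℂ with |z| < 1, (z^S − A(z))·Q(z) = (z − 1)·N(z)·A(z). -/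
/-! Multiplying the balance equation for `q j` by `z ^ j` and summing over `j`, the sum over the
levels `i > S` becomes a Cauchy product: `Q(z) = C A(z) + R(z) A(z)` with `C = ∑_{i<S} q_i` and
`R(z) = ∑_k q_{k+S} z^k`, while `z^S R(z) = Q(z) − ∑_{i<S} q_i z^i`. Eliminating `R` and writing
`z^S − z^i = (z − 1) ∑_{l=i}^{S−1} z^l` gives the identity. On the closed unit disc every series
involved converges absolutely, since a summable real sequence is absolutely summable. -/

/-- Extension of a sequence on ℕ to ℤ by zero on negative integers. -/
def aext (a : ℕ → ℝ) : ℤ → ℝ := fun k => if 0 ≤ k then a k.toNat else 0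

open Finset

lemma aext_of_neg (a : ℕ → ℝ) {k : ℤ} (hk : k < 0) : aext a k = 0 :=
  if_neg hk.not_ge

lemma aext_natCast (a : ℕ → ℝ) (n : ℕ) : aext a n = a n :=
  if_pos n.cast_nonneg

lemma summable_norm_ofReal_mul_pow {c : ℕ → ℝ} (hc : Summable c) {z : ℂ} (hz : ‖z‖ ≤ 1) :
    Summable fun i => ‖(c i : ℂ) * z ^ i‖ := by
  refine hc.abs.of_nonneg_of_le (fun _ => norm_nonneg _) fun i => ?_
  rw [norm_mul, norm_pow, Complex.norm_real, Real.norm_eq_abs]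
  exact mul_le_of_le_one_right (abs_nonneg _) (pow_le_one₀ (norm_nonneg z) hz)

lemma tsum_ofReal_mul_pow_mul_tsum {f g : ℕ → ℝ} (hf : Summable f) (hg : Summable g) {z : ℂ}
    (hz : ‖z‖ ≤ 1) :
    (∑' i, (f i : ℂ) * z ^ i) * (∑' i, (g i : ℂ) * z ^ i) =
      ∑' n, ((∑ k ∈ range (n + 1), f k * g (n - k) : ℝ) : ℂ) * z ^ n := by
  rw [tsum_mul_tsum_eq_tsum_sum_range_of_summable_norm (summable_norm_ofReal_mul_pow hf hz)
    (summable_norm_ofReal_mul_pow hg hz)]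
  refine tsum_congr fun n => ?_
  push_cast
  rw [sum_mul]
  refine sum_congr rfl fun k hk => ?_
  rw [← pow_mul_pow_sub z (Nat.le_of_lt_succ (mem_range.1 hk))]
  ring

lemma pow_mul_tsum_nat_add {c : ℕ → ℝ} (hc : Summable c) {z : ℂ} (hz : ‖z‖ ≤ 1) (S : ℕ) :
    z ^ S * ∑' k, (c (k + S) : ℂ) * z ^ k =
      ∑' i, (c i : ℂ) * z ^ i - ∑ i ∈ range S, (c i : ℂ) * z ^ i := by
  rw [← tsum_mul_left, eq_sub_iff_add_eq',
    ← (summable_norm_ofReal_mul_pow hc hz).of_norm.sum_add_tsum_nat_add S]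
  congr 1
  exact tsum_congr fun k => by ring

lemma sub_one_mul_sum_mul_geom_sum_Ico {R : Type*} [CommRing R] (c : ℕ → R) (z : R) (S : ℕ) :
    (z - 1) * ∑ i ∈ range S, c i * ∑ l ∈ Ico i S, z ^ l =
      z ^ S * ∑ i ∈ range S, c i - ∑ i ∈ range S, c i * z ^ i := by
  rw [mul_sum, mul_sum, ← sum_sub_distrib]
  refine sum_congr rfl fun i hi => ?_
  rw [mul_left_comm, mul_comm (z - 1), geom_sum_Ico_mul z (mem_range.1 hi).le]
  ring

def SatisfiesBalance (S : ℕ) (a q : ℕ → ℝ) : Prop :=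
  ∀ j : ℕ, q j = a j * (∑ i ∈ range (S + 1), q i) +
    ∑' i : ℕ, if S + 1 ≤ i then q i * aext a ((j : ℤ) - (i : ℤ) + (S : ℤ)) else 0

lemma tsum_ite_mul_aext_eq_sum (S : ℕ) (a q : ℕ → ℝ) (j : ℕ) :
    (∑' i : ℕ, if S + 1 ≤ i then q i * aext a ((j : ℤ) - (i : ℤ) + (S : ℤ)) else 0) =
      ∑ k ∈ range j, q (k + 1 + S) * a (j - (k + 1)) := by
  rw [tsum_eq_sum (s := range (S + 1 + j)), sum_range_add,
    sum_eq_zero fun i hi => if_neg (by rw [mem_range] at hi; omega), zero_add]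
  · refine sum_congr rfl fun k hk => ?_
    have hkj : k + 1 ≤ j := mem_range.1 hk
    rw [if_pos (by omega), show (j : ℤ) - ((S + 1 + k : ℕ) : ℤ) + S = ((j - (k + 1) : ℕ) : ℤ) by
      omega, aext_natCast]
    congr 2
    omega
  · intro i hi
    rw [aext_of_neg a (by rw [mem_range] at hi; omega), mul_zero, ite_self]

lemma SatisfiesBalance.eq_mul_add_convolution {S : ℕ} {a q : ℕ → ℝ} (hb : SatisfiesBalance S a q)
    (j : ℕ) : q j = a j * ∑ i ∈ range S, q i + ∑ k ∈ range (j + 1), q (k + S) * a (j - k) := by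
  -- the term `q S * a j` moves from the first summand into the convolution
  rw [hb j, tsum_ite_mul_aext_eq_sum, sum_range_succ, sum_range_succ']
  simp only [zero_add, Nat.sub_zero]
  ring

lemma SatisfiesBalance.tsum_shift_mul_tsum {S : ℕ} {a q : ℕ → ℝ} (hb : SatisfiesBalance S a q)
    (ha : Summable a) (hq : Summable q) {z : ℂ} (hz : ‖z‖ ≤ 1) :
    (∑' k, (q (k + S) : ℂ) * z ^ k) * (∑' i, (a i : ℂ) * z ^ i) =
      ∑' i, (q i : ℂ) * z ^ i - (∑ i ∈ range S, (q i : ℂ)) * ∑' i, (a i : ℂ) * z ^ i := by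
  rw [tsum_ofReal_mul_pow_mul_tsum ((summable_nat_add_iff S).2 hq) ha hz, ← tsum_mul_left,
    ← (summable_norm_ofReal_mul_pow hq hz).of_norm.tsum_sub
      ((summable_norm_ofReal_mul_pow ha hz).of_norm.mul_left _)]
  refine tsum_congr fun n => ?_
  rw [hb.eq_mul_add_convolution n]
  push_cast
  ring

theorem queue_functional_equation_general
    (S : ℕ)
    (a : ℕ → ℝ) (ha_sum : HasSum a 1)
    (q : ℕ → ℝ) (hq_sum : HasSum q 1)
    (h_balance : ∀ j : ℕ,
      q j = a j * (∑ i ∈ Finset.range (S + 1), q i) +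
        ∑' i : ℕ, if S + 1 ≤ i then q i * aext a ((j : ℤ) - (i : ℤ) + (S : ℤ)) else 0) :
    ∀ z : ℂ, ‖z‖ < 1 →
      (z ^ S - ∑' i : ℕ, (a i : ℂ) * z ^ i) * (∑' i : ℕ, (q i : ℂ) * z ^ i) =
        (z - 1) * (∑ i ∈ Finset.range S, (q i : ℂ) * ∑ l ∈ Finset.Ico i S, z ^ l) *
          (∑' i : ℕ, (a i : ℂ) * z ^ i) := by
  intro z hz
  have hRA := SatisfiesBalance.tsum_shift_mul_tsum h_balance ha_sum.summable hq_sum.summable hz.le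
  have hR := pow_mul_tsum_nat_add hq_sum.summable hz.le S
  have hN := sub_one_mul_sum_mul_geom_sum_Ico (fun i => (q i : ℂ)) z S
  linear_combination (-z ^ S) * hRA + (∑' i, (a i : ℂ) * z ^ i) * (hR - hN)

/-- If q is a stationary distribution of the queue recursion, then
for |z| < 1, (z^S − A(z)) Q(z) = (z − 1) N(z) A(z). -/
theorem queue_functional_equation
    (S : ℕ) (hS : 1 ≤ S)
    (a : ℕ → ℝ) (ha_nonneg : ∀ i, 0 ≤ a i) (ha_sum : HasSum a 1)
    (q : ℕ → ℝ) (hq_nonneg : ∀ i, 0 ≤ q i) (hq_sum : HasSum q 1)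
    (h_balance : ∀ j : ℕ,
      q j = a j * (∑ i ∈ Finset.range (S + 1), q i) +
        ∑' i : ℕ, if S + 1 ≤ i then q i * aext a ((j : ℤ) - (i : ℤ) + (S : ℤ)) else 0) :
    ∀ z : ℂ, ‖z‖ < 1 →
      (z ^ S - ∑' i : ℕ, (a i : ℂ) * z ^ i) * (∑' i : ℕ, (q i : ℂ) * z ^ i) =
        (z - 1) * (∑ i ∈ Finset.range S, (q i : ℂ) * ∑ l ∈ Finset.Ico i S, z ^ l) *
          (∑' i : ℕ, (a i : ℂ) * z ^ i) :=
  queue_functional_equation_general S a ha_sum q hq_sum h_balance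
end

section
/- Let n be a natural number, Y ≥ 0 a real number, and c : Fin n → ℝ a monotone non-decreasing function with c_i > 0 for every i. Let N* be the largest N ≤ n such that Σ_{i=0}^{N−1} c_i ≤ Y (N* exists since the empty sum is 0 ≤ Y). Then: (a) Σ_{i=0}^{N*−1} c_i ≤ Y, so the set {0, …, N*−1} is feasible; and (b) for every finite subset T of Fin n with Σ_{i∈T} c_i ≤ Y, the cardinality of T is at most N*. Hence N* = max{ |T| : T ⊆ Fin n, Σ_{i∈T} c_i ≤ Y }. -/
lemma strictMono_le_apply {k : ℕ} {g : Fin k → ℕ} (hg : StrictMono g) :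
    ∀ j : Fin k, (j : ℕ) ≤ g j := by
  intro j
  obtain ⟨m, hm⟩ := j
  induction m with
  | zero => exact Nat.zero_le _
  | succ i ih =>
    have hi : i < k := Nat.lt_of_succ_lt hm
    have h1 := ih hi
    have h2 : g ⟨i, hi⟩ < g ⟨i + 1, hm⟩ := hg (by simp [Fin.lt_def])
    simpa using Nat.lt_of_le_of_lt h1 h2

/-- With a non-decreasing positive cost vector c and budget Y ≥ 0, if N*
is the largest N ≤ n with Σ_{i<N} c_i ≤ Y, then {0,…,N*−1} is feasible, every feasible
subset T (i.e. Σ_{i∈T} c_i ≤ Y) has cardinality at most N*, and N* is attained. -/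
theorem greedy_maximizes_users
    (n : ℕ) (Y : ℝ) (hY : 0 ≤ Y)
    (c : Fin n → ℝ) (hmono : Monotone c) (hpos : ∀ i, 0 < c i)
    (Nstar : ℕ) (hNn : Nstar ≤ n)
    (hfeas : ∑ i ∈ Finset.univ.filter (fun i : Fin n => (i : ℕ) < Nstar), c i ≤ Y)
    (hmax : ∀ N : ℕ, N ≤ n →
      (∑ i ∈ Finset.univ.filter (fun i : Fin n => (i : ℕ) < N), c i ≤ Y) → N ≤ Nstar) :
    (∃ T : Finset (Fin n), (∑ i ∈ T, c i ≤ Y) ∧ T.card = Nstar) ∧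
    (∀ T : Finset (Fin n), (∑ i ∈ T, c i ≤ Y) → T.card ≤ Nstar) := by
  constructor
  · refine ⟨Finset.univ.filter (fun i : Fin n => (i : ℕ) < Nstar), hfeas, ?_⟩
    have h : Finset.univ.filter (fun i : Fin n => (i : ℕ) < Nstar)
        = Finset.map (Fin.castLEEmb hNn) Finset.univ := by
      ext i
      simp only [Finset.mem_filter, Finset.mem_univ, true_and, Finset.mem_map,
        Fin.castLEEmb_apply]
      constructor
      · intro hi; exact ⟨⟨i, hi⟩, rfl⟩
      · rintro ⟨j, rfl⟩; exact j.2
    rw [h, Finset.card_map, Finset.card_univ, Fintype.card_fin]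
  · intro T hT
    set k := T.card with hk
    have hkn : k ≤ n := by
      simpa using Finset.card_le_card (Finset.subset_univ T)
    apply hmax k hkn
    -- prefix sum ≤ sum over T
    have hprefix : ∑ i ∈ Finset.univ.filter (fun i : Fin n => (i : ℕ) < k), c i
        ≤ ∑ i ∈ T, c i := by
      have hT' : T = Finset.map (T.orderEmbOfFin hk.symm).toEmbedding Finset.univ := by
        ext i
        simp only [Finset.mem_map, Finset.mem_univ, true_and, RelEmbedding.coe_toEmbedding]
        constructor
        · intro hi
          have : i ∈ Set.range (T.orderEmbOfFin hk.symm) := by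
            rw [Finset.range_orderEmbOfFin]; exact hi
          obtain ⟨j, hj⟩ := this
          exact ⟨j, hj⟩
        · rintro ⟨j, rfl⟩; exact Finset.orderEmbOfFin_mem _ _ _
      have hP : Finset.univ.filter (fun i : Fin n => (i : ℕ) < k)
          = Finset.map (Fin.castLEEmb hkn) Finset.univ := by
        ext i
        simp only [Finset.mem_filter, Finset.mem_univ, true_and, Finset.mem_map,
          Fin.castLEEmb_apply]
        constructor
        · intro hi; exact ⟨⟨i, hi⟩, rfl⟩
        · rintro ⟨j, rfl⟩; exact j.2
      rw [hP, Finset.sum_map]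
      conv_rhs => rw [hT', Finset.sum_map]
      apply Finset.sum_le_sum
      intro j _
      apply hmono
      have hsm : StrictMono (fun j : Fin k => ((T.orderEmbOfFin hk.symm j : Fin n) : ℕ)) :=
        fun a b hab => (T.orderEmbOfFin hk.symm).strictMono hab
      have := strictMono_le_apply hsm j
      simp only [Fin.castLEEmb_apply, Fin.le_def, Fin.coe_castLE]
      exact this
    exact le_trans hprefix hT
end
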